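/- Let x∼y be an edge of G and let D = max(d_x, d_y). Then the limit κ(x,y) = lim_{p→1⁻} κ_p(x,y)/(1−p) exists, and for every p ∈ [1/(D+1), 1] one has κ_p(x,y) = (1−p)·κ(x,y). -/

import Mathlib

open scoped Classical

noncomputable def mu {V : Type*} (G : SimpleGraph V) [G.LocallyFinite] (x : V) (p : ℝ) :
    V → ℝ :=
  fun z => if z = x then p else if G.Adj x z then (1 - p) / (G.degree x) else 0

def IsPlan {V : Type*} (π : V × V → ℝ) (μ1 μ2 : V → ℝ) : Prop :=
  (∀ q, π q ∈ Set.Icc (0 : ℝ) 1) ∧ (Function.support π).Finite ∧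
    (∀ u, ∑ᶠ v, π (u, v) = μ1 u) ∧ (∀ v, ∑ᶠ u, π (u, v) = μ2 v)

noncomputable def cost {V : Type*} (G : SimpleGraph V) (π : V × V → ℝ) : ℝ :=
  ∑ᶠ q : V × V, (G.dist q.1 q.2 : ℝ) * π q

noncomputable def W1 {V : Type*} (G : SimpleGraph V) (μ1 μ2 : V → ℝ) : ℝ :=
  sInf (cost G '' {π | IsPlan π μ1 μ2})

noncomputable def kappa {V : Type*} (G : SimpleGraph V) [G.LocallyFinite]
    (p : ℝ) (x y : V) : ℝ :=
  1 - W1 G (mu G x p) (mu G y p)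

def IsLip {V : Type*} (G : SimpleGraph V) (φ : V → ℝ) : Prop :=
  ∀ u v, |φ u - φ v| ≤ (G.dist u v : ℝ)

noncomputable def Fpot {V : Type*} (G : SimpleGraph V) [G.LocallyFinite]
    (x y : V) (φ : V → ℝ) : ℝ :=
  (G.degree y : ℝ) * ∑ z ∈ (G.neighborFinset x).erase y, φ z
    - (G.degree x : ℝ) * ∑ z ∈ (G.neighborFinset y).erase x, φ z

noncomputable def cIdle {V : Type*} (G : SimpleGraph V) [G.LocallyFinite]
    (x y : V) (j : ℤ) : ℝ :=
  sSup (Fpot G x y ''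
    {φ | IsLip G φ ∧ (∀ w, ∃ n : ℤ, φ w = (n : ℝ)) ∧ φ x = (j : ℝ) ∧ φ y = 0})

noncomputable def fIdle {V : Type*} (G : SimpleGraph V) [G.LocallyFinite]
    (x y : V) (j : ℤ) (p : ℝ) : ℝ :=
  (p - (1 - p) / (G.degree y : ℝ)) * (j : ℝ)
    + ((1 - p) / ((G.degree x : ℝ) * (G.degree y : ℝ))) * cIdle G x y j

def IsFinProb {V : Type*} (μ : V → ℝ) : Prop :=
  (∀ v, 0 ≤ μ v) ∧ (Function.support μ).Finite ∧ ∑ᶠ v, μ v = 1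


/-!
Kantorovich duality holds for finitely supported measures on a connected graph: an optimal plan
exists by compactness, optimality makes its support cyclically monotone (rerouting mass along a
chain of support pairs cannot lower the cost), and Rockafellar's construction turns this into a
1-Lipschitz potential `φ` with `φ u - φ v = d(u, v)` on the support, which attains `W₁`.

For `μ_x^p, μ_y^p` the dual objective of `φ` is `p (φ x - φ y) + (1 - p) b(φ)`, where `b(φ)` is the
difference of the neighbourhood means of `φ` at `x` and at `y`. If `d_x ≤ d_y` and
`p ≥ 1/(d_y + 1)`, replacing `φ` by `max φ (φ y + 1 - d(x, ·))` makes `φ x - φ y = 1` without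
lowering the objective; the case `d_y < d_x` follows by swapping `x, y` and negating `φ`. Hence for
`p ∈ [1/(D+1), 1]` there is an optimal `φ_p` with `φ_p x - φ_p y = 1`, so
`W₁ = p + (1 - p) b(φ_p)`. Testing `φ_p` at `p₀ = 1/(D+1)` and `φ_{p₀}` at `p` shows that
`(1 - p) b(φ_p) = (1 - p) b(φ_{p₀})`, so `κ_p = (1 - p)(1 - b(φ_{p₀}))`.
-/

open Finset Function Filter Topology

section

variable {V : Type*}

section Lipschitz

variable {G : SimpleGraph V} {φ ψ : V → ℝ}

theorem IsLip.neg (hφ : IsLip G φ) : IsLip G (-φ) := fun u v => by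
  simpa only [Pi.neg_apply, neg_sub_neg, abs_sub_comm] using hφ u v

theorem IsLip.max (hφ : IsLip G φ) (hψ : IsLip G ψ) : IsLip G fun z => max (φ z) (ψ z) :=
  fun u v => (abs_max_sub_max_le_max _ _ _ _).trans (max_le (hφ u v) (hψ u v))

theorem IsLip.abs_sub_le_one (hφ : IsLip G φ) {u v : V} (h : G.Adj u v) : |φ u - φ v| ≤ 1 := by
  simpa [SimpleGraph.dist_eq_one_iff_adj.2 h] using hφ u v

theorem isLip_const_sub_dist (hG : G.Connected) (c : ℝ) (x : V) :
    IsLip G fun z => c - G.dist x z := fun u v => by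
  have h₁ : G.dist x u ≤ G.dist x v + G.dist u v := by
    rw [SimpleGraph.dist_comm (u := u)]
    exact hG.dist_triangle
  have h₂ : G.dist x v ≤ G.dist x u + G.dist u v := hG.dist_triangle
  rw [abs_le]
  constructor <;> push_cast [← Nat.cast_le (α := ℝ)] at h₁ h₂ ⊢ <;> linarith

end Lipschitz

section Plans

variable {G : SimpleGraph V} {μ ν : V → ℝ} {π η : V × V → ℝ}

theorem Set.Finite.support_row {α β M : Type*} [Zero M] {f : α × β → M}
    (h : (support f).Finite) (a : α) : (support fun b => f (a, b)).Finite :=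
  h.preimage (Prod.mk_right_injective a).injOn

theorem Set.Finite.support_col {α β M : Type*} [Zero M] {f : α × β → M}
    (h : (support f).Finite) (b : β) : (support fun a => f (a, b)).Finite :=
  h.preimage (Prod.mk_left_injective b).injOn

theorem IsPlan.nonneg (h : IsPlan π μ ν) (q : V × V) : 0 ≤ π q := (h.1 q).1

theorem IsPlan.le_left (h : IsPlan π μ ν) (u v : V) : π (u, v) ≤ μ u :=
  h.2.2.1 u ▸ single_le_finsum v (h.2.1.support_row u) fun _ => h.nonneg _

theorem IsPlan.le_right (h : IsPlan π μ ν) (u v : V) : π (u, v) ≤ ν v :=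
  h.2.2.2 v ▸ single_le_finsum u (h.2.1.support_col v) fun _ => h.nonneg _

theorem IsPlan.swap (h : IsPlan π μ ν) : IsPlan (fun q => π q.swap) ν μ :=
  ⟨fun q => h.1 q.swap, h.2.1.preimage Prod.swap_injective.injOn, h.2.2.2, h.2.2.1⟩

theorem IsPlan.exists_pos (hμ : IsFinProb μ) (h : IsPlan π μ ν) : ∃ u v, 0 < π (u, v) := by
  obtain ⟨u, hu⟩ : ∃ u, μ u ≠ 0 := by
    by_contra! h0
    simpa [finsum_eq_zero_of_forall_eq_zero h0] using hμ.2.2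
  obtain ⟨v, hv⟩ : ∃ v, π (u, v) ≠ 0 := by
    by_contra! h0
    exact hu (by rw [← h.2.2.1 u, finsum_eq_zero_of_forall_eq_zero h0])
  exact ⟨u, v, (h.nonneg _).lt_of_ne' hv⟩

theorem isPlan_of_marginals (hμ : IsFinProb μ) (h0 : ∀ q, 0 ≤ π q) (hfin : (support π).Finite)
    (hrow : ∀ u, ∑ᶠ v, π (u, v) = μ u) (hcol : ∀ v, ∑ᶠ u, π (u, v) = ν v) : IsPlan π μ ν := by
  refine ⟨fun ⟨u, v⟩ => ⟨h0 _, ?_⟩, hfin, hrow, hcol⟩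
  calc π (u, v) ≤ μ u := hrow u ▸ single_le_finsum v (hfin.support_row u) fun _ => h0 _
    _ ≤ 1 := hμ.2.2 ▸ single_le_finsum u hμ.2.1 hμ.1

theorem isPlan_mul (hμ : IsFinProb μ) (hν : IsFinProb ν) :
    IsPlan (fun q => μ q.1 * ν q.2) μ ν := by
  refine isPlan_of_marginals hμ (fun q => mul_nonneg (hμ.1 _) (hν.1 _))
    ((hμ.2.1.prod hν.2.1).subset fun q hq => ?_) (fun u => ?_) fun v => ?_
  · exact ⟨left_ne_zero_of_mul hq, right_ne_zero_of_mul hq⟩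
  · show ∑ᶠ v, μ u * ν v = μ u
    rw [← mul_finsum, hν.2.2, mul_one]
  · show ∑ᶠ u, μ u * ν v = ν v
    rw [← finsum_mul, hμ.2.2, one_mul]

theorem isPlan_iff (hμ : IsFinProb μ) {s t : Finset V} (hs : support μ ⊆ s)
    (ht : support ν ⊆ t) :
    IsPlan π μ ν ↔ (∀ q, 0 ≤ π q) ∧ (∀ q ∉ s ×ˢ t, π q = 0) ∧
      (∀ u, ∑ v ∈ t, π (u, v) = μ u) ∧ ∀ v, ∑ u ∈ s, π (u, v) = ν v := by
  have row (h : ∀ q ∉ s ×ˢ t, π q = 0) (u : V) : ∑ᶠ v, π (u, v) = ∑ v ∈ t, π (u, v) :=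
    finsum_eq_sum_of_support_subset _ fun v hv =>
      by_contra fun hvt => hv (h _ fun hq => hvt (mem_product.1 hq).2)
  have col (h : ∀ q ∉ s ×ˢ t, π q = 0) (v : V) : ∑ᶠ u, π (u, v) = ∑ u ∈ s, π (u, v) :=
    finsum_eq_sum_of_support_subset _ fun u hu =>
      by_contra fun hus => hu (h _ fun hq => hus (mem_product.1 hq).1)
  constructor
  · intro h
    have hzero : ∀ q ∉ s ×ˢ t, π q = 0 := fun ⟨u, v⟩ hq => by
      by_contra hne
      have hpos := (h.nonneg (u, v)).lt_of_ne' hne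
      exact hq (mem_product.2 ⟨hs (h.le_left u v |>.trans_lt' hpos).ne',
        ht (h.le_right u v |>.trans_lt' hpos).ne'⟩)
    exact ⟨h.nonneg, hzero, fun u => row hzero u ▸ h.2.2.1 u, fun v => col hzero v ▸ h.2.2.2 v⟩
  · rintro ⟨h0, hzero, hrow, hcol⟩
    refine isPlan_of_marginals hμ h0 ((s ×ˢ t).finite_toSet.subset fun q hq => ?_)
      (fun u => (row hzero u).trans (hrow u)) fun v => (col hzero v).trans (hcol v)
    by_contra hq'
    exact hq (hzero q hq')

theorem IsPlan.finsum_mul_fst (h : IsPlan π μ ν) (f : V → ℝ) :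
    ∑ᶠ q, f q.1 * π q = ∑ᶠ u, f u * μ u := by
  rw [finsum_curry _ (h.2.1.subset (support_mul_subset_right _ _))]
  exact finsum_congr fun u => by rw [← h.2.2.1 u, mul_finsum]

theorem IsPlan.finsum_mul_snd (h : IsPlan π μ ν) (f : V → ℝ) :
    ∑ᶠ q, f q.2 * π q = ∑ᶠ v, f v * ν v := by
  rw [← finsum_comp_equiv (Equiv.prodComm V V), ← h.swap.finsum_mul_fst]
  rfl

theorem IsPlan.finsum_sub_finsum (h : IsPlan π μ ν) (φ : V → ℝ) :
    ∑ᶠ u, φ u * μ u - ∑ᶠ v, φ v * ν v = ∑ᶠ q, (φ q.1 - φ q.2) * π q := by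
  rw [← h.finsum_mul_fst, ← h.finsum_mul_snd, ← finsum_sub_distrib
    (h.2.1.subset (support_mul_subset_right _ _)) (h.2.1.subset (support_mul_subset_right _ _))]
  simp only [sub_mul]

theorem cost_eq_sum {T : Finset (V × V)} (hT : support π ⊆ T) :
    cost G π = ∑ q ∈ T, (G.dist q.1 q.2 : ℝ) * π q :=
  finsum_eq_sum_of_support_subset _ ((support_mul_subset_right _ _).trans hT)

theorem cost_add (hπ : (support π).Finite) (hη : (support η).Finite) :
    cost G (π + η) = cost G π + cost G η := by
  simp only [cost, Pi.add_apply, mul_add]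
  exact finsum_add_distrib (hπ.subset (support_mul_subset_right _ _))
    (hη.subset (support_mul_subset_right _ _))

theorem cost_smul (ε : ℝ) (η : V × V → ℝ) : cost G (ε • η) = ε * cost G η := by
  simp only [cost, Pi.smul_apply, smul_eq_mul, mul_finsum, mul_left_comm]

theorem IsPlan.finsum_sub_finsum_le_cost (h : IsPlan π μ ν) {φ : V → ℝ} (hφ : IsLip G φ) :
    ∑ᶠ u, φ u * μ u - ∑ᶠ v, φ v * ν v ≤ cost G π := by
  rw [h.finsum_sub_finsum]
  exact finsum_le_finsum' (h.2.1.subset (support_mul_subset_right _ _))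
    (h.2.1.subset (support_mul_subset_right _ _))
    fun q => mul_le_mul_of_nonneg_right ((le_abs_self _).trans (hφ _ _)) (h.nonneg q)

theorem finsum_sub_finsum_le_W1 (hμ : IsFinProb μ) (hν : IsFinProb ν) {φ : V → ℝ}
    (hφ : IsLip G φ) : ∑ᶠ u, φ u * μ u - ∑ᶠ v, φ v * ν v ≤ W1 G μ ν :=
  le_csInf ⟨_, _, isPlan_mul hμ hν, rfl⟩ fun _ ⟨_, hπ, hc⟩ => hc ▸ hπ.finsum_sub_finsum_le_cost hφ

end Plans

def IsOptimalPlan (G : SimpleGraph V) (π : V × V → ℝ) (μ ν : V → ℝ) : Prop :=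
  IsPlan π μ ν ∧ ∀ π', IsPlan π' μ ν → cost G π ≤ cost G π'

section OptimalPlans

variable {G : SimpleGraph V} {μ ν : V → ℝ} {π η : V × V → ℝ}

theorem exists_isOptimalPlan (G : SimpleGraph V) (hμ : IsFinProb μ) (hν : IsFinProb ν) :
    ∃ π, IsOptimalPlan G π μ ν := by
  set s := hμ.2.1.toFinset
  set t := hν.2.1.toFinset
  have hplans (π : V × V → ℝ) : IsPlan π μ ν ↔ _ := isPlan_iff hμ (s := s) (t := t)
    (by simp [s]) (by simp [t])
  have hclosed : IsClosed {π | IsPlan π μ ν} := by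
    simp only [hplans, Set.ofPred_and, Set.ofPred_forall]
    refine .inter (isClosed_iInter fun q => isClosed_le continuous_const (continuous_apply q))
      (.inter (isClosed_iInter fun q => isClosed_iInter fun _ =>
        isClosed_eq (continuous_apply q) continuous_const)
      (.inter (isClosed_iInter fun u => isClosed_eq ?_ continuous_const)
        (isClosed_iInter fun v => isClosed_eq ?_ continuous_const))) <;> fun_prop
  have hcompact : IsCompact {π | IsPlan π μ ν} :=
    (isCompact_univ_pi fun _ => isCompact_Icc).of_isClosed_subset hclosed fun π hπ q _ => hπ.1 q
  have hcost : Set.EqOn (cost G) (fun π => ∑ q ∈ s ×ˢ t, (G.dist q.1 q.2 : ℝ) * π q)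
      {π | IsPlan π μ ν} := fun π hπ =>
    cost_eq_sum fun q hq => by_contra fun hq' => hq (((hplans π).1 hπ).2.1 q hq')
  obtain ⟨π, hπ, hmin⟩ := hcompact.exists_isMinOn ⟨_, isPlan_mul hμ hν⟩
    ((by fun_prop : Continuous fun π : V × V → ℝ => ∑ q ∈ s ×ˢ t, (G.dist q.1 q.2 : ℝ) * π q)
      |>.continuousOn.congr hcost)
  exact ⟨π, hπ, fun π' hπ' => hmin hπ'⟩

theorem IsOptimalPlan.cost_nonneg (hμ : IsFinProb μ) (hπ : IsOptimalPlan G π μ ν)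
    (hη : (support η).Finite) (hrow : ∀ u, ∑ᶠ v, η (u, v) = 0) (hcol : ∀ v, ∑ᶠ u, η (u, v) = 0)
    (hneg : ∀ q, η q < 0 → 0 < π q) : 0 ≤ cost G η := by
  obtain ⟨hπ, hmin⟩ := hπ
  have hev : ∀ᶠ ε in 𝓝[>] (0 : ℝ), ∀ q ∈ hη.toFinset, 0 ≤ π q + ε * η q := by
    refine (eventually_all_finset _).2 fun q _ => ?_
    rcases le_or_gt 0 (η q) with h | h
    · filter_upwards [self_mem_nhdsWithin] with ε hε
      exact add_nonneg (hπ.nonneg q) (mul_nonneg (le_of_lt hε) h)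
    · have hc : ContinuousAt (fun ε : ℝ => π q + ε * η q) 0 := by fun_prop
      exact nhdsWithin_le_nhds <|
        (hc.eventually (lt_mem_nhds (by simpa using hneg q h))).mono fun _ => le_of_lt
  obtain ⟨ε, hε, hε0⟩ := (hev.and self_mem_nhdsWithin).exists
  have hεη : (support (ε • η)).Finite := hη.subset (support_const_smul_subset ε η)
  have hplan : IsPlan (π + ε • η) μ ν := by
    refine isPlan_of_marginals hμ (fun q => ?_) ((hπ.2.1.union hεη).subset (support_add _ _))
      (fun u => ?_) fun v => ?_
    · by_cases hq : q ∈ hη.toFinset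
      · exact hε q hq
      · simpa [show η q = 0 by simpa using hq] using hπ.nonneg q
    · simp only [Pi.add_apply]
      rw [finsum_add_distrib (hπ.2.1.support_row u) (hεη.support_row u), hπ.2.2.1]
      simp only [Pi.smul_apply, smul_eq_mul, ← mul_finsum, hrow, mul_zero, add_zero]
    · simp only [Pi.add_apply]
      rw [finsum_add_distrib (hπ.2.1.support_col v) (hεη.support_col v), hπ.2.2.2]
      simp only [Pi.smul_apply, smul_eq_mul, ← mul_finsum, hcol, mul_zero, add_zero]
  have := hmin _ hplan
  rw [cost_add hπ.2.1 hεη, cost_smul] at this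
  exact nonneg_of_mul_nonneg_right (by linarith) hε0

theorem support_single_finite {α M : Type*} [DecidableEq α] [Zero M] (a : α) (c : M) :
    (support (Pi.single a c)).Finite :=
  (Set.finite_singleton a).subset Pi.support_single_subset

noncomputable def reroute (u w v : V) : V × V → ℝ :=
  Pi.single (w, v) 1 - Pi.single (u, v) 1

theorem support_reroute_finite (u w v : V) : (support (reroute u w v)).Finite :=
  ((support_single_finite _ _).union (support_single_finite _ _)).subset (support_sub _ _)

theorem finsum_reroute_row (u w v u' : V) :
    ∑ᶠ v', reroute u w v (u', v') = (if u' = w then 1 else 0) - if u' = u then 1 else 0 := by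
  rw [finsum_eq_single _ v fun v' hv' => by simp [reroute, hv']]
  simp [reroute, Pi.single_apply]

theorem finsum_reroute_col (u w v v' : V) : ∑ᶠ u', reroute u w v (u', v') = 0 := by
  have h (a : V) :
      ∑ᶠ u', Pi.single (M := fun _ => ℝ) (a, v) 1 (u', v') = if v' = v then 1 else 0 := by
    rw [finsum_eq_single _ a fun u' hu' => Pi.single_eq_of_ne (by simp [hu']) _]
    simp [Pi.single_apply]
  simp only [reroute, Pi.sub_apply]
  rw [finsum_sub_distrib ((support_single_finite _ _).support_col v')
    ((support_single_finite _ _).support_col v'), h, h, sub_self]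

theorem cost_reroute (u w v : V) : cost G (reroute u w v) = G.dist w v - G.dist u v := by
  have h (a : V × V) :
      ∑ᶠ q, (G.dist q.1 q.2 : ℝ) * Pi.single (M := fun _ => ℝ) a 1 q = G.dist a.1 a.2 := by
    rw [finsum_eq_single _ a fun q hq => by simp [hq]]
    simp
  rw [cost, ← h (w, v), ← h (u, v), ← finsum_sub_distrib]
  · simp [reroute, mul_sub]
  all_goals exact (support_single_finite _ _).subset (support_mul_subset_right _ _)

theorem reroute_nonneg_of_ne {u w v : V} {q : V × V} (hq : q ≠ (u, v)) :
    0 ≤ reroute u w v q := by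
  simp only [reroute, Pi.sub_apply, Pi.single_apply, hq, if_false, sub_zero]
  split_ifs <;> norm_num

variable {x₀ w : V} {W : ℝ}

/-- `SupportChain G π x₀ w W` says that there are `x₀ = u₀, u₁, …, uₙ₊₁ = w` and `v₀, …, vₙ` with
every `(uᵢ, vᵢ)` in the support of `π` and `W = ∑ᵢ (d(uᵢ, vᵢ) - d(uᵢ₊₁, vᵢ))`; moving mass from
each `(uᵢ, vᵢ)` to `(uᵢ₊₁, vᵢ)` changes the cost by `-W`. -/
inductive SupportChain (G : SimpleGraph V) (π : V × V → ℝ) (x₀ : V) : V → ℝ → Prop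
  | nil : SupportChain G π x₀ x₀ 0
  | cons {u v w : V} {W : ℝ} : SupportChain G π x₀ u W → 0 < π (u, v) →
      SupportChain G π x₀ w (W + G.dist u v - G.dist w v)

theorem SupportChain.exists_perturbation (h : SupportChain G π x₀ w W) :
    ∃ η : V × V → ℝ, (support η).Finite ∧
      (∀ u, ∑ᶠ v, η (u, v) = (if u = w then 1 else 0) - if u = x₀ then 1 else 0) ∧
      (∀ v, ∑ᶠ u, η (u, v) = 0) ∧ cost G η = -W ∧ ∀ q, η q < 0 → 0 < π q := by
  induction h with
  | nil => exact ⟨0, by simp, by simp, by simp, by simp [cost], by simp⟩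
  | @cons u v w W _ huv ih =>
    obtain ⟨η, hfin, hrow, hcol, hcost, hneg⟩ := ih
    have hr := support_reroute_finite u w v
    refine ⟨η + reroute u w v, (hfin.union hr).subset (support_add _ _), fun u' => ?_,
      fun v' => ?_, ?_, fun q hq => ?_⟩
    · simp only [Pi.add_apply]
      rw [finsum_add_distrib (hfin.support_row u') (hr.support_row u'), hrow, finsum_reroute_row]
      ring
    · simp only [Pi.add_apply]
      rw [finsum_add_distrib (hfin.support_col v') (hr.support_col v'), hcol, finsum_reroute_col,
        add_zero]
    · rw [cost_add hfin hr, hcost, cost_reroute]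
      ring
    · by_cases hq' : q = (u, v)
      · exact hq' ▸ huv
      · exact hneg q (by linarith [reroute_nonneg_of_ne (w := w) hq', show η q + _ < 0 from hq])

theorem SupportChain.nonpos (hμ : IsFinProb μ) (hπ : IsOptimalPlan G π μ ν)
    (h : SupportChain G π x₀ x₀ W) : W ≤ 0 := by
  obtain ⟨η, hfin, hrow, hcol, hcost, hneg⟩ := h.exists_perturbation
  have := hπ.cost_nonneg hμ hfin (by simpa using hrow) hcol hneg
  linarith

theorem SupportChain.le_dist (hG : G.Connected) (hμ : IsFinProb μ) (hπ : IsOptimalPlan G π μ ν)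
    (h : SupportChain G π x₀ w W) : W ≤ G.dist x₀ w := by
  cases h with
  | nil => simp
  | @cons u v _ W hu huv =>
    have hclosed := (hu.cons (w := x₀) huv).nonpos hμ hπ
    have : (G.dist x₀ v : ℝ) ≤ G.dist x₀ w + G.dist w v := by exact_mod_cast hG.dist_triangle
    linarith

theorem SupportChain.exists_ge_sub_dist (hG : G.Connected) {v₀ : V} (hx₀ : 0 < π (x₀, v₀))
    (h : SupportChain G π x₀ w W) (w' : V) :
    ∃ W', SupportChain G π x₀ w' W' ∧ W - G.dist w w' ≤ W' := by
  cases h with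
  | nil =>
    refine ⟨_, nil.cons hx₀, ?_⟩
    have : (G.dist w' v₀ : ℝ) ≤ G.dist x₀ w' + G.dist x₀ v₀ := by
      rw [SimpleGraph.dist_comm (u := x₀) (v := w')]
      exact_mod_cast hG.dist_triangle
    linarith
  | @cons u v _ W hu huv =>
    refine ⟨_, hu.cons huv, ?_⟩
    have : (G.dist w' v : ℝ) ≤ G.dist w w' + G.dist w v := by
      rw [SimpleGraph.dist_comm (u := w)]
      exact_mod_cast hG.dist_triangle
    linarith

theorem IsOptimalPlan.exists_isLip_sub_eq_dist (hG : G.Connected) (hμ : IsFinProb μ)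
    (hπ : IsOptimalPlan G π μ ν) :
    ∃ φ, IsLip G φ ∧ ∀ u v, 0 < π (u, v) → φ u - φ v = G.dist u v := by
  obtain ⟨x₀, v₀, hx₀⟩ := hπ.1.exists_pos hμ
  set F : V → ℝ := fun w => sSup {W | SupportChain G π x₀ w W}
  have hne (w : V) : {W | SupportChain G π x₀ w W}.Nonempty := ⟨_, .cons .nil hx₀⟩
  have hbdd (w : V) : BddAbove {W | SupportChain G π x₀ w W} :=
    ⟨_, fun _ hW => hW.le_dist hG hμ hπ⟩
  have hF (w w' : V) : F w ≤ F w' + G.dist w w' := csSup_le (hne w) fun W hW => by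
    obtain ⟨W', hW', hle⟩ := hW.exists_ge_sub_dist hG hx₀ w'
    linarith [le_csSup (hbdd w') hW']
  have hF' (w w' : V) : F w' ≤ F w + G.dist w w' := SimpleGraph.dist_comm (G := G) ▸ hF w' w
  refine ⟨fun w => -F w, fun u v => abs_le.2 ⟨by linarith [hF u v], by linarith [hF' u v]⟩,
    fun u v huv => ?_⟩
  have : F u + G.dist u v ≤ F v := by
    refine add_le_of_le_sub_right (csSup_le (hne u) fun W hW => le_sub_iff_add_le.2 ?_)
    exact le_csSup (hbdd v) (by simpa using hW.cons (w := v) huv)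
  linarith [hF' u v]

theorem exists_isLip_W1_eq (hG : G.Connected) (hμ : IsFinProb μ) (hν : IsFinProb ν) :
    ∃ φ, IsLip G φ ∧ W1 G μ ν = ∑ᶠ u, φ u * μ u - ∑ᶠ v, φ v * ν v := by
  obtain ⟨π, hπ⟩ := exists_isOptimalPlan G hμ hν
  obtain ⟨φ, hφ, htight⟩ := hπ.exists_isLip_sub_eq_dist hG hμ
  refine ⟨φ, hφ, ?_⟩
  have hW1 : W1 G μ ν = cost G π :=
    IsLeast.csInf_eq ⟨⟨π, hπ.1, rfl⟩, fun _ ⟨π', hπ', hc⟩ => hc ▸ hπ.2 π' hπ'⟩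
  rw [hW1, hπ.1.finsum_sub_finsum, cost]
  refine finsum_congr fun q => ?_
  rcases (hπ.1.nonneg q).eq_or_lt with h | h
  · simp [← h]
  · rw [htight q.1 q.2 h]

end OptimalPlans

section Curvature

variable {G : SimpleGraph V} [G.LocallyFinite] {x y : V} {p : ℝ}

theorem finsum_mul_mu (f : V → ℝ) :
    ∑ᶠ z, f z * mu G x p z =
      p * f x + (1 - p) * (∑ z ∈ G.neighborFinset x, f z) / G.degree x := by
  rw [finsum_eq_sum_of_support_subset (s := insert x (G.neighborFinset x)) _ fun z hz => by
      by_contra h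
      simp_all [mu]]
  rw [sum_insert (by simp), sum_congr rfl fun z hz => by
    rw [mu, if_neg (G.ne_of_adj ((G.mem_neighborFinset x z).1 hz)).symm,
      if_pos ((G.mem_neighborFinset x z).1 hz)]]
  rw [← sum_mul, show mu G x p x = p by simp [mu]]
  ring

theorem isFinProb_mu (hx : 0 < G.degree x) (hp₀ : 0 ≤ p) (hp₁ : p ≤ 1) :
    IsFinProb (mu G x p) := by
  refine ⟨fun z => ?_, (insert x (G.neighborFinset x)).finite_toSet.subset fun z hz => ?_, ?_⟩
  · unfold mu
    split_ifs
    exacts [hp₀, div_nonneg (sub_nonneg.2 hp₁) (Nat.cast_nonneg _), le_rfl]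
  · by_contra h
    simp_all [mu]
  · have := finsum_mul_mu (G := G) (x := x) (p := p) fun _ => 1
    simp only [one_mul, sum_const, SimpleGraph.card_neighborFinset_eq_degree, nsmul_eq_mul,
      mul_one] at this
    rw [this, mul_div_assoc, div_self (by positivity), mul_one]
    ring

noncomputable def dualObjective (G : SimpleGraph V) [G.LocallyFinite] (p : ℝ) (x y : V)
    (φ : V → ℝ) : ℝ :=
  ∑ᶠ z, φ z * mu G x p z - ∑ᶠ z, φ z * mu G y p z

theorem dualObjective_eq (φ : V → ℝ) :
    dualObjective G p x y φ = p * (φ x - φ y) + (1 - p) *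
      ((∑ z ∈ G.neighborFinset x, φ z) / G.degree x -
        (∑ z ∈ G.neighborFinset y, φ z) / G.degree y) := by
  simp only [dualObjective, finsum_mul_mu]
  ring

theorem dualObjective_neg_swap (φ : V → ℝ) :
    dualObjective G p y x (-φ) = dualObjective G p x y φ := by
  simp only [dualObjective, Pi.neg_apply, neg_mul, finsum_neg_distrib]
  ring

theorem dualObjective_le_W1 (hxy : G.Adj x y) (hp₀ : 0 ≤ p) (hp₁ : p ≤ 1) {φ : V → ℝ}
    (hφ : IsLip G φ) : dualObjective G p x y φ ≤ W1 G (mu G x p) (mu G y p) :=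
  finsum_sub_finsum_le_W1 (isFinProb_mu ((G.degree_pos_iff_exists_adj x).2 ⟨y, hxy⟩) hp₀ hp₁)
    (isFinProb_mu ((G.degree_pos_iff_exists_adj y).2 ⟨x, hxy.symm⟩) hp₀ hp₁) hφ

theorem exists_isLip_W1_eq_dualObjective (hG : G.Connected) (hxy : G.Adj x y) (hp₀ : 0 ≤ p)
    (hp₁ : p ≤ 1) : ∃ φ, IsLip G φ ∧ W1 G (mu G x p) (mu G y p) = dualObjective G p x y φ :=
  exists_isLip_W1_eq hG (isFinProb_mu ((G.degree_pos_iff_exists_adj x).2 ⟨y, hxy⟩) hp₀ hp₁)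
    (isFinProb_mu ((G.degree_pos_iff_exists_adj y).2 ⟨x, hxy.symm⟩) hp₀ hp₁)

theorem dualObjective_le_of_sum_sub_le (hx : 0 < G.degree x) (hdeg : G.degree x ≤ G.degree y)
    (hp : 1 / ((G.degree y : ℝ) + 1) ≤ p) (hp₁ : p ≤ 1) {φ ψ : V → ℝ} (hge : ∀ z, φ z ≤ ψ z)
    (hy : ψ y = φ y) (hsum : ∑ z ∈ G.neighborFinset y, (ψ z - φ z) ≤
      (ψ x - φ x) + ∑ z ∈ G.neighborFinset x, (ψ z - φ z)) :
    dualObjective G p x y φ ≤ dualObjective G p x y ψ := by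
  have hdx : (0 : ℝ) < G.degree x := by exact_mod_cast hx
  have hdy : (0 : ℝ) < G.degree y := hdx.trans_le (by exact_mod_cast hdeg)
  have hpy : 1 - p ≤ p * G.degree y := by
    rw [div_le_iff₀ (by positivity)] at hp
    linarith
  rw [← sub_nonneg, dualObjective_eq, dualObjective_eq]
  set t := ψ x - φ x
  set a := ∑ z ∈ G.neighborFinset x, (ψ z - φ z)
  have ht : 0 ≤ t := sub_nonneg.2 (hge x)
  have ha : 0 ≤ a := sum_nonneg fun z _ => sub_nonneg.2 (hge z)
  calc 0 ≤ p * t - (1 - p) * t / G.degree y := by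
        rw [sub_nonneg, div_le_iff₀ hdy]
        nlinarith
    _ = p * t + (1 - p) * (a / G.degree y - (t + a) / G.degree y) := by ring
    _ ≤ p * t + (1 - p) * (a / G.degree x -
          (∑ z ∈ G.neighborFinset y, (ψ z - φ z)) / G.degree y) := by
        gcongr
    _ = _ := by
        simp only [t, a, sum_sub_distrib, hy]
        ring

theorem exists_isLip_sub_eq_one_of_degree_le (hG : G.Connected) (hxy : G.Adj x y)
    (hdeg : G.degree x ≤ G.degree y) (hp : 1 / ((G.degree y : ℝ) + 1) ≤ p) (hp₁ : p ≤ 1)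
    {φ : V → ℝ} (hφ : IsLip G φ) :
    ∃ ψ, IsLip G ψ ∧ ψ x - ψ y = 1 ∧ dualObjective G p x y φ ≤ dualObjective G p x y ψ := by
  set ψ : V → ℝ := fun z => max (φ z) (φ y + 1 - G.dist x z)
  have hψx : ψ x = φ y + 1 := by
    simp only [ψ, SimpleGraph.dist_self, Nat.cast_zero, sub_zero]
    exact max_eq_right (by linarith [(abs_le.1 (hφ.abs_sub_le_one hxy)).2])
  have hψy : ψ y = φ y := by simp [ψ, SimpleGraph.dist_eq_one_iff_adj.2 hxy]
  have hge (z : V) : φ z ≤ ψ z := le_max_left _ _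
  have hfar : ∀ z ∈ (G.neighborFinset y).erase x, ψ z - φ z ≠ 0 → z ∈ G.neighborFinset x := by
    intro z hz hne
    by_contra hzx
    obtain ⟨hzx', hyz⟩ := mem_erase.1 hz
    rw [SimpleGraph.mem_neighborFinset] at hyz hzx
    have h2 : (2 : ℝ) ≤ G.dist x z := by
      exact_mod_cast hG.one_lt_dist_of_ne_of_not_adj (Ne.symm hzx') hzx
    have h1 := (abs_le.1 (hφ.abs_sub_le_one hyz)).2
    exact hne (by simp only [ψ, max_eq_left (by linarith : φ y + 1 - G.dist x z ≤ φ z), sub_self])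
  refine ⟨ψ, hφ.max (isLip_const_sub_dist hG _ x), by rw [hψx, hψy]; ring,
    dualObjective_le_of_sum_sub_le ((G.degree_pos_iff_exists_adj x).2 ⟨y, hxy⟩) hdeg hp hp₁ hge
      hψy ?_⟩
  rw [← add_sum_erase _ _ ((G.mem_neighborFinset y x).2 hxy.symm), ← sum_filter_of_ne hfar]
  exact (add_le_add_iff_left _).2 (sum_le_sum_of_subset_of_nonneg
    (fun z hz => (mem_filter.1 hz).2) fun z _ _ => sub_nonneg.2 (hge z))

theorem exists_isLip_sub_eq_one (hG : G.Connected) (hxy : G.Adj x y)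
    (hp : 1 / (max (G.degree x : ℝ) (G.degree y) + 1) ≤ p) (hp₁ : p ≤ 1) {φ : V → ℝ}
    (hφ : IsLip G φ) :
    ∃ ψ, IsLip G ψ ∧ ψ x - ψ y = 1 ∧ dualObjective G p x y φ ≤ dualObjective G p x y ψ := by
  rcases le_total (G.degree x) (G.degree y) with h | h
  · rw [max_eq_right (by exact_mod_cast h)] at hp
    exact exists_isLip_sub_eq_one_of_degree_le hG hxy h hp hp₁ hφ
  · rw [max_eq_left (by exact_mod_cast h)] at hp
    obtain ⟨ψ, hψ, hψyx, hle⟩ :=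
      exists_isLip_sub_eq_one_of_degree_le hG hxy.symm h hp hp₁ hφ.neg
    refine ⟨-ψ, hψ.neg, by simp only [Pi.neg_apply]; linarith, ?_⟩
    rwa [dualObjective_neg_swap, ← neg_neg ψ, dualObjective_neg_swap] at hle

theorem one_div_max_degree_add_one_lt_one (hxy : G.Adj x y) :
    1 / (max (G.degree x : ℝ) (G.degree y) + 1) < 1 := by
  have : (0 : ℝ) < G.degree x := by exact_mod_cast (G.degree_pos_iff_exists_adj x).2 ⟨y, hxy⟩
  rw [div_lt_one (by positivity)]
  linarith [le_max_left (G.degree x : ℝ) (G.degree y)]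

theorem exists_isLip_sub_eq_one_W1_eq (hG : G.Connected) (hxy : G.Adj x y)
    (hp : p ∈ Set.Icc (1 / (max (G.degree x : ℝ) (G.degree y) + 1)) 1) :
    ∃ φ, IsLip G φ ∧ φ x - φ y = 1 ∧ W1 G (mu G x p) (mu G y p) = dualObjective G p x y φ := by
  have hp₀ : 0 ≤ p := le_trans (by positivity) hp.1
  obtain ⟨φ₀, hφ₀, hW⟩ := exists_isLip_W1_eq_dualObjective hG hxy hp₀ hp.2
  obtain ⟨φ, hφ, hφxy, hle⟩ := exists_isLip_sub_eq_one hG hxy hp.1 hp.2 hφ₀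
  exact ⟨φ, hφ, hφxy, le_antisymm (hW ▸ hle) (dualObjective_le_W1 hxy hp₀ hp.2 hφ)⟩

theorem exists_W1_mu_eq (hG : G.Connected) (hxy : G.Adj x y) :
    ∃ β : ℝ, ∀ p ∈ Set.Icc (1 / (max (G.degree x : ℝ) (G.degree y) + 1)) 1,
      W1 G (mu G x p) (mu G y p) = p + (1 - p) * β := by
  set p₀ := 1 / (max (G.degree x : ℝ) (G.degree y) + 1)
  have hp₀ : p₀ < 1 := one_div_max_degree_add_one_lt_one hxy
  set b : (V → ℝ) → ℝ := fun φ =>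
    (∑ z ∈ G.neighborFinset x, φ z) / G.degree x - (∑ z ∈ G.neighborFinset y, φ z) / G.degree y
  obtain ⟨φ₀, hφ₀, hxy₀, hW₀⟩ := exists_isLip_sub_eq_one_W1_eq hG hxy ⟨le_rfl, hp₀.le⟩
  refine ⟨b φ₀, fun p hp => ?_⟩
  obtain ⟨φ, hφ, hxyφ, hW⟩ := exists_isLip_sub_eq_one_W1_eq hG hxy hp
  have h₁ := dualObjective_le_W1 hxy (le_trans (by positivity) hp.1) hp.2 hφ₀
  have h₂ := dualObjective_le_W1 hxy (p := p₀) (by positivity) hp₀.le hφ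
  rw [dualObjective_eq, hxy₀] at h₁ hW₀
  rw [dualObjective_eq, hxyφ] at h₂ hW
  have hb : b φ ≤ b φ₀ := le_of_mul_le_mul_left (by linarith) (sub_pos.2 hp₀)
  nlinarith [mul_le_mul_of_nonneg_left hb (sub_nonneg.2 hp.2)]

end Curvature

end

theorem stmt15 {V : Type*} (G : SimpleGraph V) [G.LocallyFinite] (hG : G.Connected)
    (x y : V) (hxy : G.Adj x y) :
    ∃ K : ℝ,
      Filter.Tendsto (fun p => kappa G p x y / (1 - p)) (nhdsWithin 1 (Set.Iio 1)) (nhds K) ∧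
      ∀ p ∈ Set.Icc (1 / ((max (G.degree x) (G.degree y) : ℝ) + 1)) (1 : ℝ),
        kappa G p x y = (1 - p) * K := by
  obtain ⟨β, hβ⟩ := exists_W1_mu_eq hG hxy
  have hκ (p) (hp : p ∈ Set.Icc (1 / (max (G.degree x : ℝ) (G.degree y) + 1)) 1) :
      kappa G p x y = (1 - p) * (1 - β) := by
    rw [kappa, hβ p hp]
    ring
  refine ⟨1 - β, tendsto_const_nhds.congr' ?_, hκ⟩
  filter_upwards [Ioo_mem_nhdsLT (one_div_max_degree_add_one_lt_one hxy)] with p hp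
  rw [hκ p (Set.Ioo_subset_Icc_self hp), mul_div_cancel_left₀ _ (sub_ne_zero.2 hp.2.ne')]
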